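/- Let $\mathscr{A}$ be an abelian category and suppose we are given two short exact sequences $0 \to M_1 \xrightarrow{(\iota_1,\iota_2)^T} F \oplus M_2 \xrightarrow{(\nu_1,\nu_2)} M_3 \to 0$ and $0 \to M_2 \xrightarrow{(\nu_2,\nu_3)^T} M_3 \oplus M_4 \xrightarrow{(\mu_1,\mu_2)} M_5 \to 0$. Then the sequence $0 \to M_1 \xrightarrow{(\iota_1, \nu_3\iota_2)^T} F \oplus M_4 \xrightarrow{(\mu_1\nu_1, -\mu_2)} M_5 \to 0$ is also a short exact sequence. -/

import Mathlib

/-!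
A sequence `0 → W → X ⊞ Y → Z → 0` with maps `(a, b)ᵀ` and `(c, d)` is short exact exactly when
the square with sides `a, b, c, -d` is bicartesian: the kernel condition says it is a pullback,
the cokernel condition says (after a change of sign on `Y`) that it is a pushout. The two given
sequences thus yield bicartesian squares with sides `ι₁, ι₂, ν₁, -ν₂` and, after negating the
horizontal sides, `-ν₂, ν₃, μ₁, μ₂`. They share the side `-ν₂`, and pasting them gives the
bicartesian square with sides `ι₁, ι₂ ≫ ν₃, ν₁ ≫ μ₁, μ₂`, i.e. the third short exact sequence.
-/

open CategoryTheory CategoryTheory.Limits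

namespace CategoryTheory

variable {C : Type*} [Category C]

theorem BicartesianSq.paste_vert {X₁₁ X₁₂ X₂₁ X₂₂ X₃₁ X₃₂ : C} {h₁₁ : X₁₁ ⟶ X₁₂}
    {h₂₁ : X₂₁ ⟶ X₂₂} {h₃₁ : X₃₁ ⟶ X₃₂} {v₁₁ : X₁₁ ⟶ X₂₁} {v₁₂ : X₁₂ ⟶ X₂₂}
    {v₂₁ : X₂₁ ⟶ X₃₁} {v₂₂ : X₂₂ ⟶ X₃₂}
    (s : BicartesianSq h₁₁ v₁₁ v₁₂ h₂₁) (t : BicartesianSq h₂₁ v₂₁ v₂₂ h₃₁) :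
    BicartesianSq h₁₁ (v₁₁ ≫ v₂₁) (v₁₂ ≫ v₂₂) h₃₁ :=
  .of_isPullback_isPushout (s.toIsPullback.paste_vert t.toIsPullback)
    (s.toIsPushout.paste_vert t.toIsPushout)

section Preadditive

variable [Preadditive C] {W X Y Z : C}

theorem IsPushout.neg_g_neg_inr {f : W ⟶ X} {g : W ⟶ Y} {inl : X ⟶ Z} {inr : Y ⟶ Z}
    (sq : IsPushout f g inl inr) : IsPushout f (-g) inl (-inr) :=
  sq.of_iso (Iso.refl _) (Iso.refl _) (-Iso.refl _) (Iso.refl _)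
    (by simp) (by simp) (by simp) (by simp)

theorem BicartesianSq.neg_horiz {f : W ⟶ X} {g : W ⟶ Y} {h : X ⟶ Z} {i : Y ⟶ Z}
    (sq : BicartesianSq f g h i) : BicartesianSq (-f) g h (-i) :=
  .of_isPullback_isPushout
    (sq.toIsPullback.of_iso (Iso.refl _) (-Iso.refl _) (Iso.refl _) (-Iso.refl _)
      (by simp) (by simp) (by simp) (by simp))
    (sq.toIsPushout.of_iso (Iso.refl _) (-Iso.refl _) (Iso.refl _) (-Iso.refl _)
      (by simp) (by simp) (by simp) (by simp))

end Preadditive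

section Abelian

variable [Abelian C] {W X Y Z : C} {a : W ⟶ X} {b : W ⟶ Y} {c : X ⟶ Z} {d : Y ⟶ Z}

theorem BicartesianSq.of_shortExact {w : biprod.lift a b ≫ biprod.desc c d = 0}
    (hS : (ShortComplex.mk _ _ w).ShortExact) : BicartesianSq a b c (-d) := by
  have := hS.mono_f
  have := hS.epi_g
  rw [biprod.lift_desc] at w
  refine .of_isPullback_isPushout ?_ ?_
  · obtain ⟨g, rfl⟩ : ∃ g, d = -g := ⟨-d, (neg_neg d).symm⟩
    have sq : CommSq a b c g := ⟨by simpa [add_eq_zero_iff_eq_neg] using w⟩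
    rw [neg_neg]
    exact .of_isLimit (sq.isLimitEquivIsLimitKernelFork.symm hS.exact.fIsKernel)
  · obtain ⟨g, rfl⟩ : ∃ g, b = -g := ⟨-b, (neg_neg b).symm⟩
    have sq : CommSq a g c d := ⟨by simpa [add_eq_zero_iff_eq_neg] using w⟩
    exact (IsPushout.of_isColimit
      (sq.isColimitEquivIsColimitCokernelCofork.symm hS.exact.gIsCokernel)).neg_g_neg_inr

theorem BicartesianSq.shortExact (sq : BicartesianSq a b c d) :
    (ShortComplex.mk (biprod.lift a b) (biprod.desc c (-d)) (by simp [sq.w])).ShortExact where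
  exact := ShortComplex.exact_of_f_is_kernel _ sq.isLimitKernelFork
  mono_f := sq.mono_shortComplex'_f
  epi_g := sq.toIsPushout.neg_g_neg_inr.epi_shortComplex_g

end Abelian

end CategoryTheory

/-- **Lemma 5.3 (Statement 0).** Given short exact sequences
`0 → M₁ → F ⊞ M₂ → M₃ → 0` (with maps `(ι₁, ι₂)ᵀ` and `(ν₁, ν₂)`) and
`0 → M₂ → M₃ ⊞ M₄ → M₅ → 0` (with maps `(ν₂, ν₃)ᵀ` and `(μ₁, μ₂)`) in an abelian
category, the sequence `0 → M₁ → F ⊞ M₄ → M₅ → 0` with maps `(ι₁, ι₂ ≫ ν₃)ᵀ` and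
`(ν₁ ≫ μ₁, -μ₂)` is also short exact. -/
theorem stmt0 {C : Type*} [Category C] [Abelian C]
    (M₁ F M₂ M₃ M₄ M₅ : C)
    (ι₁ : M₁ ⟶ F) (ι₂ : M₁ ⟶ M₂) (ν₁ : F ⟶ M₃) (ν₂ : M₂ ⟶ M₃) (ν₃ : M₂ ⟶ M₄)
    (μ₁ : M₃ ⟶ M₅) (μ₂ : M₄ ⟶ M₅)
    (w₁ : biprod.lift ι₁ ι₂ ≫ biprod.desc ν₁ ν₂ = 0)
    (h₁ : (ShortComplex.mk (biprod.lift ι₁ ι₂) (biprod.desc ν₁ ν₂) w₁).ShortExact)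
    (w₂ : biprod.lift ν₂ ν₃ ≫ biprod.desc μ₁ μ₂ = 0)
    (h₂ : (ShortComplex.mk (biprod.lift ν₂ ν₃) (biprod.desc μ₁ μ₂) w₂).ShortExact) :
    ∃ w : biprod.lift ι₁ (ι₂ ≫ ν₃) ≫ biprod.desc (ν₁ ≫ μ₁) (-μ₂) = 0,
      (ShortComplex.mk (biprod.lift ι₁ (ι₂ ≫ ν₃)) (biprod.desc (ν₁ ≫ μ₁) (-μ₂)) w).ShortExact := by
  have top : BicartesianSq ι₁ ι₂ ν₁ (-ν₂) := .of_shortExact h₁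
  have bottom : BicartesianSq (-ν₂) ν₃ μ₁ μ₂ := by
    simpa only [neg_neg] using (BicartesianSq.of_shortExact h₂).neg_horiz
  exact ⟨_, (top.paste_vert bottom).shortExact⟩
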